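/- Let n ≥ 3 be odd, let a = b0, b1, …, bn = c be elements of M with b0 β b1 γ b2 β b3 … β bn (consecutive elements alternately β- and γ-related, starting and ending with β) and a α c. Then there exists an n-(n−2)-n chain. (Base case of the odd induction in the proof of Theorem 1.1, identity (1.4).) -/

import Mathlib

/-- Alternating relational composition with `k` factors, alternating between
`δ` and `ε`, starting with `δ`.  `AltRel δ ε 0` is equality. -/
def AltRel {M : Type*} (δ ε : M → M → Prop) : ℕ → M → M → Prop
  | 0, x, z => x = z
  | k+1, x, z => ∃ y, δ x y ∧ AltRel ε δ k y z

/-- A ternary operation `t` is compatible with the relation `θ`. -/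
def Compat {M : Type*} (θ : M → M → Prop) (t : M → M → M → M) : Prop :=
  ∀ x x' y y' z z', θ x x' → θ y y' → θ z z' → θ (t x y z) (t x' y' z')

/-- An `n`-`ℓ`-`n` chain from `a` to `c`, encoded as a function `D : ℕ → M` whose
relevant values are the `2*n + ℓ + 1` elements
`A₀,…,A_{n-1}, B₀,…,B_ℓ, C₁,…,C_n` (so `B j = D (n + j)`):
consecutive elements are alternately `β`- and `γ`-related starting with `β`,
(C1) every element is `α`-related to `a`, and
(C2) for every `j ≤ ℓ`, both `(a, B j)` and `(B j, c)` belong to the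
alternating composition of `β` and `γ` with `n` factors starting with `β`. -/
def IsNLNChain {M : Type*} (α β γ : M → M → Prop) (n ℓ : ℕ) (a c : M)
    (D : ℕ → M) : Prop :=
  D 0 = a ∧ D (2*n + ℓ) = c ∧
  (∀ i < 2*n + ℓ, if Even i then β (D i) (D (i+1)) else γ (D i) (D (i+1))) ∧
  (∀ i ≤ 2*n + ℓ, α a (D i)) ∧
  (∀ j ≤ ℓ, AltRel β γ n a (D (n + j)) ∧ AltRel β γ n (D (n + j)) c)

/-!
Apply `t1`, `t2`, `t3` to `(a, b i, c)`: as `i` runs along the `β`/`γ`-path `b` from `a` to `c`,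
this yields three alternating paths, all inside the `α`-class of `a` because `tₖ a y a = a` and
`a α c`. Run the `t1`-path forwards, the `t2`-path backwards (as `n` is odd, it still starts with
a `β`-step) and the `t3`-path forwards. The Jónsson identities `t1 a c c = t2 a c c` and
`t2 a a c = t3 a a c` make them meet; at each meeting point two consecutive `β`-steps merge into
one, which shortens the length `3n` to `3n - 2`. Every middle element has the form `t2 a y c`,
and mapping the path `b` by `t2 a y ·` and by `t2 · y c` connects it to `a` and to `c` by
`n`-step alternating paths.
-/

section

variable {M : Type*}

section Compat

variable {θ : M → M → Prop} {t : M → M → M → M}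

theorem Compat.apply_left (ht : Compat θ t) (hθ : ∀ x, θ x x) (y z : M) {x x' : M}
    (h : θ x x') : θ (t x y z) (t x' y z) :=
  ht _ _ _ _ _ _ h (hθ y) (hθ z)

theorem Compat.apply_mid (ht : Compat θ t) (hθ : ∀ x, θ x x) (x z : M) {y y' : M}
    (h : θ y y') : θ (t x y z) (t x y' z) :=
  ht _ _ _ _ _ _ (hθ x) h (hθ z)

theorem Compat.apply_right (ht : Compat θ t) (hθ : ∀ x, θ x x) (x y : M) {z z' : M}
    (h : θ z z') : θ (t x y z) (t x y z') :=
  ht _ _ _ _ _ _ (hθ x) (hθ y) h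

theorem Compat.rel_apply_of_rel (ht : Compat θ t) (hθ : Equivalence θ)
    (hid : ∀ x y, t x y x = x) {a c : M} (hac : θ a c) (y : M) : θ a (t a y c) := by
  have h := ht.apply_right hθ.refl a y (hθ.symm hac)
  rw [hid] at h
  exact hθ.symm h

end Compat

theorem AltRel.map {δ ε : M → M → Prop} {k : ℕ} {x z : M} (h : AltRel δ ε k x z) (g : M → M)
    (hδ : ∀ x y, δ x y → δ (g x) (g y)) (hε : ∀ x y, ε x y → ε (g x) (g y)) :
    AltRel δ ε k (g x) (g z) := by
  induction k generalizing δ ε x with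
  | zero => exact congrArg g h
  | succ k ih =>
    obtain ⟨y, hxy, hyz⟩ := h
    exact ⟨g y, hδ _ _ hxy, ih hyz hε hδ⟩

theorem AltRel.of_idempotent_apply {δ ε : M → M → Prop} {t : M → M → M → M}
    (hδt : Compat δ t) (hεt : Compat ε t) (hδ : ∀ x, δ x x) (hε : ∀ x, ε x x)
    (hid : ∀ x y, t x y x = x) {k : ℕ} {a c : M} (h : AltRel δ ε k a c) (y : M) :
    AltRel δ ε k a (t a y c) ∧ AltRel δ ε k (t a y c) c := by
  have hl := h.map (t a y ·) (fun _ _ => hδt.apply_right hδ a y)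
    (fun _ _ => hεt.apply_right hε a y)
  have hr := h.map (t · y c) (fun _ _ => hδt.apply_left hδ y c)
    (fun _ _ => hεt.apply_left hε y c)
  rw [hid] at hl hr
  exact ⟨hl, hr⟩

def IsAltChain (β γ : M → M → Prop) (m : ℕ) (f : ℕ → M) : Prop :=
  ∀ i < m, if Even i then β (f i) (f (i + 1)) else γ (f i) (f (i + 1))

def joinAt (m : ℕ) (f g : ℕ → M) (i : ℕ) : M :=
  if i ≤ m then f i else g (i - m)

section joinAt

variable {m i : ℕ} {f g : ℕ → M}

theorem joinAt_of_le (h : i ≤ m) : joinAt m f g i = f i := if_pos h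

theorem joinAt_of_lt (h : m < i) : joinAt m f g i = g (i - m) := if_neg (Nat.not_le.2 h)

end joinAt

namespace IsAltChain

variable {β γ : M → M → Prop} {m : ℕ} {f : ℕ → M}

theorem altRel (h : IsAltChain β γ m f) : AltRel β γ m (f 0) (f m) := by
  induction m generalizing β γ f with
  | zero => rfl
  | succ m ih =>
    refine ⟨f 1, by simpa using h 0 m.succ_pos, ih (f := (f <| · + 1)) fun i hi => ?_⟩
    have hstep := h (i + 1) (by omega)
    simp only [Nat.even_add_one] at hstep
    split_ifs at hstep ⊢ <;> trivial

theorem map (h : IsAltChain β γ m f) (g : M → M) (hβ : ∀ x y, β x y → β (g x) (g y))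
    (hγ : ∀ x y, γ x y → γ (g x) (g y)) :
    IsAltChain β γ m (g ∘ f) := fun i hi => by
  have hstep := h i hi
  split_ifs at hstep ⊢
  exacts [hβ _ _ hstep, hγ _ _ hstep]

theorem reverse (h : IsAltChain β γ m f) (hβ : ∀ {x y}, β x y → β y x)
    (hγ : ∀ {x y}, γ x y → γ y x) (hm : Odd m) :
    IsAltChain β γ m (fun i => f (m - i)) := fun i hi => by
  have hstep := h (m - 1 - i) (by omega)
  rw [show m - 1 - i + 1 = m - i by omega] at hstep
  dsimp only
  rw [show m - (i + 1) = m - 1 - i by omega]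
  obtain ⟨k, rfl⟩ := hm
  simp only [Nat.even_iff] at hstep ⊢
  split_ifs at hstep ⊢ <;> first | omega | exact hβ hstep | exact hγ hstep

/-- At the junction `f (m - 1) β f m = g 0 β g 1` the two `β`-steps merge into one. -/
theorem joinAt {k : ℕ} {g : ℕ → M} (hf : IsAltChain β γ m f) (hg : IsAltChain β γ k g)
    (hfg : f m = g 0) (hm : Odd m) (hβ : ∀ {x y z}, β x y → β y z → β x z) :
    IsAltChain β γ (m + k - 1) (_root_.joinAt (m - 1) f g) := fun i hi => by
  obtain ⟨j, rfl⟩ := hm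
  rw [Nat.add_sub_cancel]
  rcases lt_trichotomy i (2 * j) with hi' | rfl | hi'
  · rw [_root_.joinAt_of_le hi'.le, _root_.joinAt_of_le hi']
    exact hf i (by omega)
  · have hlast := hf (2 * j) (by omega)
    have hfirst := hg 0 (by omega)
    rw [if_pos (even_two_mul j)] at hlast ⊢
    rw [if_pos Even.zero, ← hfg] at hfirst
    rw [_root_.joinAt_of_le le_rfl, _root_.joinAt_of_lt (by omega),
      show 2 * j + 1 - 2 * j = 1 by omega]
    exact hβ hlast hfirst
  · have hstep := hg (i - 2 * j) (by omega)
    rw [_root_.joinAt_of_lt hi', _root_.joinAt_of_lt (by omega),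
      show i + 1 - 2 * j = i - 2 * j + 1 by omega]
    simp only [Nat.even_iff] at hstep ⊢
    rwa [show (i - 2 * j) % 2 = i % 2 by omega] at hstep

end IsAltChain

section JonssonChain

variable (t1 t2 t3 : M → M → M → M) (n : ℕ) (a c : M) (b : ℕ → M)

def jonssonChain : ℕ → M :=
  joinAt (2 * n - 2) (joinAt (n - 1) (fun i => t1 a (b i) c) (fun i => t2 a (b (n - i)) c))
    (fun i => t3 a (b i) c)

variable {t1 t2 t3 n a c b}

theorem jonssonChain_zero : jonssonChain t1 t2 t3 n a c b 0 = t1 a (b 0) c := by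
  simp [jonssonChain, joinAt]

theorem jonssonChain_last (hn : 1 ≤ n) :
    jonssonChain t1 t2 t3 n a c b (3 * n - 2) = t3 a (b n) c := by
  rw [jonssonChain, joinAt_of_lt (by omega), show 3 * n - 2 - (2 * n - 2) = n by omega]

theorem jonssonChain_add (hn : 2 ≤ n) {j : ℕ} (hj : j ≤ n - 2) :
    jonssonChain t1 t2 t3 n a c b (n + j) = t2 a (b (n - 1 - j)) c := by
  rw [jonssonChain, joinAt_of_le (by omega), joinAt_of_lt (by omega),
    show n - (n + j - (n - 1)) = n - 1 - j by omega]

theorem rel_jonssonChain {α : M → M → Prop} (hα : Equivalence α) (h1 : Compat α t1)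
    (h2 : Compat α t2) (h3 : Compat α t3) (hJ1 : ∀ x y, t1 x y x = x)
    (hJ2 : ∀ x y, t2 x y x = x) (hJ3 : ∀ x y, t3 x y x = x) (hac : α a c) (i : ℕ) :
    α a (jonssonChain t1 t2 t3 n a c b i) := by
  simp only [jonssonChain, joinAt]
  split_ifs
  exacts [h1.rel_apply_of_rel hα hJ1 hac _, h2.rel_apply_of_rel hα hJ2 hac _,
    h3.rel_apply_of_rel hα hJ3 hac _]

theorem isAltChain_jonssonChain {β γ : M → M → Prop} (hβ : Equivalence β)
    (hγ : Equivalence γ) (hβt1 : Compat β t1) (hβt2 : Compat β t2) (hβt3 : Compat β t3)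
    (hγt1 : Compat γ t1) (hγt2 : Compat γ t2) (hγt3 : Compat γ t3)
    (hJ5 : ∀ x z, t1 x z z = t2 x z z) (hJ6 : ∀ x z, t2 x x z = t3 x x z)
    (hno : Odd n) (hb : IsAltChain β γ n b) (hb0 : b 0 = a) (hbn : b n = c) :
    IsAltChain β γ (3 * n - 2) (jonssonChain t1 t2 t3 n a c b) := by
  have h1 : IsAltChain β γ n (fun i => t1 a (b i) c) :=
    hb.map (t1 a · c) (fun _ _ => hβt1.apply_mid hβ.refl a c)
      (fun _ _ => hγt1.apply_mid hγ.refl a c)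
  have h2 : IsAltChain β γ n (fun i => t2 a (b (n - i)) c) :=
    (hb.reverse hβ.symm hγ.symm hno).map (t2 a · c)
      (fun _ _ => hβt2.apply_mid hβ.refl a c) (fun _ _ => hγt2.apply_mid hγ.refl a c)
  have h3 : IsAltChain β γ n (fun i => t3 a (b i) c) :=
    hb.map (t3 a · c) (fun _ _ => hβt3.apply_mid hβ.refl a c)
      (fun _ _ => hγt3.apply_mid hγ.refl a c)
  have h12 := h1.joinAt h2 (by simp only [hbn, Nat.sub_zero, hJ5]) hno hβ.trans
  have hjunction : joinAt (n - 1) (fun i => t1 a (b i) c) (fun i => t2 a (b (n - i)) c)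
      (n + n - 1) = t3 a (b 0) c := by
    have := hno.pos
    rw [joinAt_of_lt (by omega), show n - (n + n - 1 - (n - 1)) = 0 by omega, hb0, hJ6]
  have h123 := h12.joinAt h3 hjunction
    (by obtain ⟨k, rfl⟩ := hno; exact ⟨2 * k, by omega⟩) hβ.trans
  rwa [show n + n - 1 + n - 1 = 3 * n - 2 by omega, show n + n - 1 - 1 = 2 * n - 2 by omega]
    at h123

end JonssonChain

end

theorem stmt_9_general
    {M : Type*}
    (t1 t2 t3 : M → M → M → M) (α β γ : M → M → Prop)
    (hJ1 : ∀ x y : M, t1 x y x = x)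
    (hJ2 : ∀ x y : M, t2 x y x = x)
    (hJ3 : ∀ x y : M, t3 x y x = x)
    (hJ4 : ∀ x z : M, t1 x x z = x)
    (hJ5 : ∀ x z : M, t1 x z z = t2 x z z)
    (hJ6 : ∀ x z : M, t2 x x z = t3 x x z)
    (hJ7 : ∀ x z : M, t3 x z z = z)
    (hα : Equivalence α) (hβ : Equivalence β) (hγ : Equivalence γ)
    (hcong : ∀ θ ∈ ({α, β, γ} : Set (M → M → Prop)),
      Compat θ t1 ∧ Compat θ t2 ∧ Compat θ t3)
    (n : ℕ) (hn : 3 ≤ n) (hno : Odd n) (a c : M) (b : ℕ → M)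
    (hb0 : b 0 = a) (hbn : b n = c)
    (hbalt : ∀ i < n, if Even i then β (b i) (b (i+1)) else γ (b i) (b (i+1)))
    (hac : α a c) :
    ∃ D : ℕ → M, IsNLNChain α β γ n (n - 2) a c D := by
  obtain ⟨hαt1, hαt2, hαt3⟩ := hcong α (by simp)
  obtain ⟨hβt1, hβt2, hβt3⟩ := hcong β (by simp)
  obtain ⟨hγt1, hγt2, hγt3⟩ := hcong γ (by simp)
  have hb : IsAltChain β γ n b := hbalt
  have hlength : 2 * n + (n - 2) = 3 * n - 2 := by omega
  refine ⟨jonssonChain t1 t2 t3 n a c b, ?_, ?_, ?_, ?_, fun j hj => ?_⟩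
  · rw [jonssonChain_zero, hb0, hJ4]
  · rw [hlength, jonssonChain_last (by omega), hbn, hJ7]
  · rw [hlength]
    exact isAltChain_jonssonChain hβ hγ hβt1 hβt2 hβt3 hγt1 hγt2 hγt3
      hJ5 hJ6 hno hb hb0 hbn
  · exact fun i _ => rel_jonssonChain hα hαt1 hαt2 hαt3 hJ1 hJ2 hJ3 hac i
  · have hbac : AltRel β γ n a c := hb0 ▸ hbn ▸ hb.altRel
    rw [jonssonChain_add (by omega) hj]
    exact hbac.of_idempotent_apply hβt2 hγt2 hβ.refl hγ.refl hJ2 _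

theorem stmt_9
    {M : Type*} [Nonempty M]
    (t1 t2 t3 : M → M → M → M) (α β γ : M → M → Prop)
    (hJ1 : ∀ x y : M, t1 x y x = x)
    (hJ2 : ∀ x y : M, t2 x y x = x)
    (hJ3 : ∀ x y : M, t3 x y x = x)
    (hJ4 : ∀ x z : M, t1 x x z = x)
    (hJ5 : ∀ x z : M, t1 x z z = t2 x z z)
    (hJ6 : ∀ x z : M, t2 x x z = t3 x x z)
    (hJ7 : ∀ x z : M, t3 x z z = z)
    (hα : Equivalence α) (hβ : Equivalence β) (hγ : Equivalence γ)
    (hcong : ∀ θ ∈ ({α, β, γ} : Set (M → M → Prop)),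
      Compat θ t1 ∧ Compat θ t2 ∧ Compat θ t3)
    (n : ℕ) (hn : 3 ≤ n) (hno : Odd n) (a c : M) (b : ℕ → M)
    (hb0 : b 0 = a) (hbn : b n = c)
    (hbalt : ∀ i < n, if Even i then β (b i) (b (i+1)) else γ (b i) (b (i+1)))
    (hac : α a c) :
    ∃ D : ℕ → M, IsNLNChain α β γ n (n - 2) a c D :=
  stmt_9_general t1 t2 t3 α β γ hJ1 hJ2 hJ3 hJ4 hJ5 hJ6 hJ7 hα hβ hγ hcong n hn hno a c b hb0 hbn
    hbalt hac
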